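/- arXiv:1305.5955 — 2 statements merged into one kernel-verified Lean document; each statement's English description precedes it below -/
import Mathlib

section
/- Let (G,p) be an r-dimensional tensegrity framework on n vertices in ℝ^r with r ≤ n−2. Suppose (1) (G,p) admits a proper positive semidefinite stress matrix Ω with rank n−r−1, and (2) for each vertex i, the set {p^i} ∪ {p^j : {i,j} ∈ B ∪ C* ∪ S*} affinely spans ℝ^r, where C* = {{i,j}∈C : ω_ij ≠ 0} and S* = {{i,j}∈S : ω_ij ≠ 0} for the proper stress ω associated with Ω. Then (G,p) is universally rigid. -/
open Matrix BigOperators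

noncomputable section

/-- Squared Euclidean distance between two points of `ℝ^r`. -/
def sqDist {r : ℕ} (x y : Fin r → ℝ) : ℝ := ∑ k, (x k - y k) ^ 2

/-- `(G,q)` is dominated by `(G,p)`, where the edges of `G` are partitioned into
bars `B`, cables `C` and struts `S`. -/
def Dominates {n r s : ℕ} (B C S : Set (Fin n × Fin n))
    (p : Fin n → Fin r → ℝ) (q : Fin n → Fin s → ℝ) : Prop :=
  (∀ e ∈ B, sqDist (q e.1) (q e.2) = sqDist (p e.1) (p e.2)) ∧
  (∀ e ∈ C, sqDist (q e.1) (q e.2) ≤ sqDist (p e.1) (p e.2)) ∧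
  (∀ e ∈ S, sqDist (p e.1) (p e.2) ≤ sqDist (q e.1) (q e.2))

/-- `(G,q)` is congruent to `(G,p)`. -/
def FrameworkCongruent {n r s : ℕ} (p : Fin n → Fin r → ℝ) (q : Fin n → Fin s → ℝ) : Prop :=
  ∀ i j, sqDist (q i) (q j) = sqDist (p i) (p j)

/-- `(G,p)` is universally rigid: every framework `(G,q)` in any dimension `s`
dominated by `(G,p)` is congruent to `(G,p)`. -/
def UniversallyRigid {n r : ℕ} (B C S : Set (Fin n × Fin n))
    (p : Fin n → Fin r → ℝ) : Prop :=
  ∀ (s : ℕ) (q : Fin n → Fin s → ℝ), Dominates B C S p q → FrameworkCongruent p q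

/-- `(G,q)` is affinely-dominated by `(G,p)`: dominated and `q^i = A p^i + b`. -/
def AffinelyDominated {n r : ℕ} (B C S : Set (Fin n × Fin n))
    (p q : Fin n → Fin r → ℝ) : Prop :=
  Dominates B C S p q ∧
  ∃ (A : Matrix (Fin r) (Fin r) ℝ) (b : Fin r → ℝ), ∀ i, q i = A.mulVec (p i) + b

/-- `ω` is an equilibrium stress of the framework with edge set `E` and configuration `p`. -/
def IsStress {n r : ℕ} (E : Set (Fin n × Fin n)) (p : Fin n → Fin r → ℝ)
    (ω : Fin n → Fin n → ℝ) : Prop :=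
  (∀ i j, ω i j = ω j i) ∧ (∀ i j, (i, j) ∉ E → ω i j = 0) ∧
  (∀ i : Fin n, ∑ j, ω i j • (p i - p j) = 0)

/-- A stress is proper if `ω_ij ≥ 0` on cables and `ω_ij ≤ 0` on struts. -/
def IsProperStress {n : ℕ} (C S : Set (Fin n × Fin n)) (ω : Fin n → Fin n → ℝ) : Prop :=
  (∀ e ∈ C, 0 ≤ ω e.1 e.2) ∧ (∀ e ∈ S, ω e.1 e.2 ≤ 0)

/-- The stress matrix `Ω` associated to the stress `ω`. -/
def stressMatrix {n : ℕ} (ω : Fin n → Fin n → ℝ) : Matrix (Fin n) (Fin n) ℝ :=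
  Matrix.of fun i j => if i = j then ∑ k, ω i k else -ω i j

/-- `B`, `C`, `S` are the (symmetrically encoded) bars, cables and struts of a
simple connected tensegrity graph on `{1,…,n}`. -/
def TensegrityGraph {n : ℕ} (B C S : Set (Fin n × Fin n)) : Prop :=
  (∀ i j, (i, j) ∈ B → (j, i) ∈ B) ∧ (∀ i j, (i, j) ∈ C → (j, i) ∈ C) ∧
  (∀ i j, (i, j) ∈ S → (j, i) ∈ S) ∧ (∀ i : Fin n, (i, i) ∉ B ∪ C ∪ S) ∧
  B ∩ C = ∅ ∧ B ∩ S = ∅ ∧ C ∩ S = ∅ ∧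
  (SimpleGraph.fromRel fun i j => (i, j) ∈ B ∪ C ∪ S).Connected

/-- A set of points of `ℝ^r` is in general position if every `r+1` of them are
affinely independent. -/
def SetInGeneralPosition {r : ℕ} (A : Set (Fin r → ℝ)) : Prop :=
  ∀ T : Finset (Fin r → ℝ), ↑T ⊆ A → T.card = r + 1 →
    AffineIndependent ℝ (fun x : {x // x ∈ T} => (x : Fin r → ℝ))

/-- `Z` is a Gale matrix of the configuration with matrix `P`: its columns form a
basis of the null space of the matrix obtained by stacking `Pᵀ` on top of `eᵀ`. -/
def IsGaleMatrix {n r m : ℕ} (P : Matrix (Fin n) (Fin r) ℝ)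
    (Z : Matrix (Fin n) (Fin m) ℝ) : Prop :=
  (∀ k, Pᵀ *ᵥ (fun i => Z i k) = 0) ∧ (∀ k, ∑ i, Z i k = 0) ∧
  LinearIndependent ℝ (fun k i => Z i k) ∧
  ∀ v : Fin n → ℝ, Pᵀ *ᵥ v = 0 → ∑ i, v i = 0 →
    v ∈ Submodule.span ℝ (Set.range fun k i => Z i k)

/-- `Ω` is a stress matrix of the framework with edge set `E` and configuration
matrix `P` (with centroid at the origin): it is symmetric, vanishes on missing
edges, and satisfies `Pᵀ Ω = 0` and `Ω e = 0`. -/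
def IsStressMatrix {n r : ℕ} (E : Set (Fin n × Fin n)) (P : Matrix (Fin n) (Fin r) ℝ)
    (Ω : Matrix (Fin n) (Fin n) ℝ) : Prop :=
  Ω.IsSymm ∧ (∀ i j, i ≠ j → (i, j) ∉ E → Ω i j = 0) ∧
  Pᵀ * Ω = 0 ∧ Ω *ᵥ (fun _ => (1 : ℝ)) = 0

/-- The matrix `F^{ij} = (e^i - e^j)(e^i - e^j)ᵀ`. -/
def Fmat {n : ℕ} (i j : Fin n) : Matrix (Fin n) (Fin n) ℝ :=
  Matrix.vecMulVec (Pi.single i 1 - Pi.single j 1) (Pi.single i 1 - Pi.single j 1)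

/-- The matrix `E^{ij} = e^i (e^j)ᵀ + e^j (e^i)ᵀ`. -/
def Emat {n : ℕ} (i j : Fin n) : Matrix (Fin n) (Fin n) ℝ :=
  Matrix.vecMulVec (Pi.single i 1) (Pi.single j 1) +
    Matrix.vecMulVec (Pi.single j 1) (Pi.single i 1)

/-- The matrix `L^i = e^i eᵀ + e (e^i)ᵀ`. -/
def Lmat {n : ℕ} (i : Fin n) : Matrix (Fin n) (Fin n) ℝ :=
  Matrix.vecMulVec (Pi.single i 1) (fun _ => 1) +
    Matrix.vecMulVec (fun _ => 1) (Pi.single i 1)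

/-- `ℰ(y) = Σ y_ij E^{ij}` (for `y` supported on the relevant pairs `i < j`). -/
def EscrY {n : ℕ} (y : Fin n → Fin n → ℝ) : Matrix (Fin n) (Fin n) ℝ :=
  ∑ i, ∑ j, y i j • Emat i j

/-- The vector `x = -(1/n) ℰ(y) e + (1/(2n²)) (eᵀ ℰ(y) e) e`. -/
def xvec {n : ℕ} (y : Fin n → Fin n → ℝ) : Fin n → ℝ :=
  (-(1 / (n : ℝ))) • (EscrY y *ᵥ fun _ => (1 : ℝ)) +
    ((1 / (2 * (n : ℝ) ^ 2)) * ((fun _ => (1 : ℝ)) ⬝ᵥ (EscrY y *ᵥ fun _ => (1 : ℝ)))) •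
      (fun _ : Fin n => (1 : ℝ))

/-!
For a framework `q` dominated by `p`, properness makes every term
`ω_ij (‖p^i - p^j‖² - ‖q^i - q^j‖²)` nonnegative, while by equilibrium their sum is
`-2 ∑_k ⟪q_k, Ω q_k⟫ ≤ 0`, `q_k` the coordinate vectors of `q`. So stressed edges keep their
lengths and every `q_k` lies in `ker Ω`, which by the rank condition consists of the affine
functions of `p`: `q^i = A p^i + b`. For `M = AᵀA - 1` the function `i ↦ ⟪p^i, M p^i⟫` is again
annihilated by `Ω`, hence affine, say `⟪p^i, c⟫ + c₀`. Since `⟪p^i - p^j, M (p^i - p^j)⟫ = 0` along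
bars and stressed edges, `2 M p^i - c` is orthogonal to the edge vectors at `i`, which span `ℝ^r`.
Thus `M p^i` does not depend on `i`, and `q` is congruent to `p`.
-/

lemma eq_zero_of_forall_sub_dotProduct_eq_zero {𝕜 ι : Type*} [Field 𝕜] [LinearOrder 𝕜]
    [IsStrictOrderedRing 𝕜] [Fintype ι] {s : Set (ι → 𝕜)} {x v : ι → 𝕜}
    (hs : affineSpan 𝕜 s = ⊤) (hx : x ∈ s) (h : ∀ y ∈ s, (y - x) ⬝ᵥ v = 0) : v = 0 := by
  have hspan : Submodule.span 𝕜 ((· -ᵥ x) '' s) = ⊤ := by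
    rw [← vectorSpan_eq_span_vsub_set_right 𝕜 hx, ← direction_affineSpan, hs,
      AffineSubspace.direction_top]
  have hv : (dotProductBilin 𝕜 𝕜).flip v = 0 :=
    LinearMap.ext_on hspan (by rintro _ ⟨y, hy, rfl⟩; exact h y hy)
  exact dotProduct_self_eq_zero.mp (LinearMap.congr_fun hv v)

lemma dotProduct_mulVec_sub_sub {R ι : Type*} [CommRing R] [Fintype ι] {M : Matrix ι ι R}
    (hM : M.IsSymm) (x d : ι → R) :
    (x - d) ⬝ᵥ M *ᵥ (x - d) = x ⬝ᵥ M *ᵥ x - 2 * (d ⬝ᵥ M *ᵥ x) + d ⬝ᵥ M *ᵥ d := by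
  have hswap : x ⬝ᵥ M *ᵥ d = d ⬝ᵥ M *ᵥ x := by
    rw [dotProduct_mulVec, ← mulVec_transpose, hM.eq, dotProduct_comm]
  simp only [mulVec_sub, sub_dotProduct, dotProduct_sub, hswap]
  ring

lemma sqDist_eq_dotProduct {r : ℕ} (x y : Fin r → ℝ) : sqDist x y = (x - y) ⬝ᵥ (x - y) := by
  simp only [sqDist, dotProduct, Pi.sub_apply, sq]

lemma sqDist_mulVec_add_sub_sqDist {r s : ℕ} (A : Matrix (Fin s) (Fin r) ℝ) (b : Fin s → ℝ)
    (x y : Fin r → ℝ) :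
    sqDist (A *ᵥ x + b) (A *ᵥ y + b) - sqDist x y = (x - y) ⬝ᵥ (Aᵀ * A - 1) *ᵥ (x - y) := by
  have hA : ∀ u, u ⬝ᵥ (Aᵀ * A) *ᵥ u = A *ᵥ u ⬝ᵥ A *ᵥ u := fun u => by
    rw [← mulVec_mulVec, dotProduct_mulVec, vecMul_transpose]
  rw [sqDist_eq_dotProduct, sqDist_eq_dotProduct, add_sub_add_right_eq_sub, ← mulVec_sub,
    sub_mulVec, one_mulVec, dotProduct_sub (x - y) _ (x - y), hA]

lemma isSymm_transpose_mul_self_sub_one {R m n : Type*} [CommRing R] [Fintype m]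
    [DecidableEq n] (A : Matrix m n R) :
    (Aᵀ * A - 1).IsSymm := by
  simp only [IsSymm, transpose_sub, transpose_mul, transpose_transpose, transpose_one]

section StressMatrix

variable {n : ℕ} {ω : Fin n → Fin n → ℝ}

lemma stressMatrix_mulVec_apply (hdiag : ∀ i, ω i i = 0) (x : Fin n → ℝ) (i : Fin n) :
    (stressMatrix ω *ᵥ x) i = ∑ j, ω i j * (x i - x j) := by
  have hentry : ∀ j, stressMatrix ω i j * x j
      = (if i = j then (∑ k, ω i k) * x i else 0) - ω i j * x j := by
    intro j
    by_cases h : i = j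
    · subst h; simp [stressMatrix, hdiag i]
    · simp [stressMatrix, h]
  simp only [mulVec, dotProduct, hentry, Finset.sum_sub_distrib, Finset.sum_ite_eq,
    Finset.mem_univ, if_true, Finset.sum_mul, mul_sub]

lemma sum_stress_mul_sq_sub (hsymm : ∀ i j, ω i j = ω j i) (hdiag : ∀ i, ω i i = 0)
    (x : Fin n → ℝ) :
    ∑ i, ∑ j, ω i j * (x i - x j) ^ 2 = 2 * (x ⬝ᵥ stressMatrix ω *ᵥ x) := by
  have hrow : x ⬝ᵥ stressMatrix ω *ᵥ x = ∑ i, ∑ j, ω i j * (x i * (x i - x j)) := by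
    simp only [dotProduct, stressMatrix_mulVec_apply hdiag, Finset.mul_sum]
    exact Finset.sum_congr rfl fun i _ => Finset.sum_congr rfl fun j _ => by ring
  have hcol : x ⬝ᵥ stressMatrix ω *ᵥ x = ∑ i, ∑ j, ω i j * (x j * (x j - x i)) := by
    rw [hrow, Finset.sum_comm]
    simp only [hsymm]
  rw [two_mul]
  nth_rw 1 [hrow]
  rw [hcol, ← Finset.sum_add_distrib]
  refine Finset.sum_congr rfl fun i _ => ?_
  rw [← Finset.sum_add_distrib]
  exact Finset.sum_congr rfl fun j _ => by ring

lemma sum_stress_mul_sqDist (hsymm : ∀ i j, ω i j = ω j i) (hdiag : ∀ i, ω i i = 0)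
    {s : ℕ} (q : Fin n → Fin s → ℝ) :
    ∑ i, ∑ j, ω i j * sqDist (q i) (q j)
      = 2 * ∑ k, (fun i => q i k) ⬝ᵥ stressMatrix ω *ᵥ (fun i => q i k) := by
  simp only [sqDist, Finset.mul_sum, ← sum_stress_mul_sq_sub hsymm hdiag]
  exact (Finset.sum_congr rfl fun i _ => Finset.sum_comm).trans Finset.sum_comm

variable {r : ℕ} {p : Fin n → Fin r → ℝ}

lemma stressMatrix_mulVec_affine (hdiag : ∀ i, ω i i = 0)
    (hequil : ∀ i, ∑ j, ω i j • (p i - p j) = 0) (c : Fin r → ℝ) (c₀ : ℝ) :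
    stressMatrix ω *ᵥ (fun i => p i ⬝ᵥ c + c₀) = 0 := by
  funext i
  calc (stressMatrix ω *ᵥ (fun i => p i ⬝ᵥ c + c₀)) i
      = (∑ j, ω i j • (p i - p j)) ⬝ᵥ c := by
        simp only [stressMatrix_mulVec_apply hdiag, sum_dotProduct, smul_dotProduct,
          sub_dotProduct, smul_eq_mul, add_sub_add_right_eq_sub]
    _ = 0 := by rw [hequil i, zero_dotProduct]

lemma sum_stress_mul_sqDist_self_eq_zero (hsymm : ∀ i j, ω i j = ω j i)
    (hdiag : ∀ i, ω i i = 0) (hequil : ∀ i, ∑ j, ω i j • (p i - p j) = 0) :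
    ∑ i, ∑ j, ω i j * sqDist (p i) (p j) = 0 := by
  rw [sum_stress_mul_sqDist hsymm hdiag]
  have hcol : ∀ k, stressMatrix ω *ᵥ (fun i => p i k) = 0 := fun k => by
    simpa using stressMatrix_mulVec_affine hdiag hequil (Pi.single k 1) 0
  simp [hcol]

end StressMatrix

section Domination

variable {n r s : ℕ} {B C S : Set (Fin n × Fin n)} {p : Fin n → Fin r → ℝ}
  {q : Fin n → Fin s → ℝ} {ω : Fin n → Fin n → ℝ}

lemma Dominates.stress_mul_sub_sqDist_nonneg (hdom : Dominates B C S p q)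
    (hsupp : ∀ i j, (i, j) ∉ B ∪ C ∪ S → ω i j = 0) (hproper : IsProperStress C S ω)
    (i j : Fin n) : 0 ≤ ω i j * (sqDist (p i) (p j) - sqDist (q i) (q j)) := by
  by_cases hE : (i, j) ∈ B ∪ C ∪ S
  · rcases hE with (hB | hC) | hS
    · rw [hdom.1 _ hB, sub_self, mul_zero]
    · exact mul_nonneg (hproper.1 _ hC) (sub_nonneg.2 (hdom.2.1 _ hC))
    · exact mul_nonneg_of_nonpos_of_nonpos (hproper.2 _ hS) (sub_nonpos.2 (hdom.2.2 _ hS))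
  · rw [hsupp i j hE, zero_mul]

lemma Dominates.stressMatrix_mulVec_eq_zero_and_sqDist_eq (hdom : Dominates B C S p q)
    (hstress : IsStress (B ∪ C ∪ S) p ω) (hdiag : ∀ i, ω i i = 0)
    (hproper : IsProperStress C S ω) (hpsd : (stressMatrix ω).PosSemidef) :
    (∀ k, stressMatrix ω *ᵥ (fun i => q i k) = 0) ∧
      ∀ i j, ω i j ≠ 0 → sqDist (q i) (q j) = sqDist (p i) (p j) := by
  obtain ⟨hsymm, hsupp, hequil⟩ := hstress
  set T : Fin n → Fin n → ℝ := fun i j => ω i j * (sqDist (p i) (p j) - sqDist (q i) (q j))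
  set E : Fin s → ℝ := fun k => (fun i => q i k) ⬝ᵥ stressMatrix ω *ᵥ (fun i => q i k)
  have hT : ∀ i j, 0 ≤ T i j := hdom.stress_mul_sub_sqDist_nonneg hsupp hproper
  have hE : ∀ k, 0 ≤ E k := fun k => by simpa using hpsd.dotProduct_mulVec_nonneg _
  have hbalance : ∑ i, ∑ j, T i j + 2 * ∑ k, E k = 0 := by
    simp only [T, E, mul_sub, Finset.sum_sub_distrib,
      sum_stress_mul_sqDist_self_eq_zero hsymm hdiag hequil, sum_stress_mul_sqDist hsymm hdiag q]
    ring
  have hTsum := Finset.sum_nonneg fun i (_ : i ∈ Finset.univ) =>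
    Finset.sum_nonneg fun j (_ : j ∈ Finset.univ) => hT i j
  have hEsum := Finset.sum_nonneg fun k (_ : k ∈ Finset.univ) => hE k
  have hT0 : ∀ i j, T i j = 0 := fun i j => by
    have hrow := congrFun ((Fintype.sum_eq_zero_iff_of_nonneg fun i =>
      Finset.sum_nonneg fun j _ => hT i j).mp (by linarith)) i
    exact congrFun ((Fintype.sum_eq_zero_iff_of_nonneg (hT i)).mp hrow) j
  have hE0 : ∀ k, E k = 0 :=
    congrFun ((Fintype.sum_eq_zero_iff_of_nonneg hE).mp (by linarith))
  refine ⟨fun k => (hpsd.dotProduct_mulVec_zero_iff _).mp (by simpa using hE0 k), ?_⟩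
  intro i j hω
  exact (sub_eq_zero.mp ((mul_eq_zero.mp (hT0 i j)).resolve_left hω)).symm

end Domination

section AffineImage

variable {n r : ℕ}

def affineEval (p : Fin n → Fin r → ℝ) : (Fin r → ℝ) × ℝ →ₗ[ℝ] Fin n → ℝ where
  toFun c i := p i ⬝ᵥ c.1 + c.2
  map_add' c d := by
    funext i
    simp only [Prod.fst_add, Prod.snd_add, dotProduct_add, Pi.add_apply]
    ring
  map_smul' t c := by
    funext i
    simp only [Prod.smul_fst, Prod.smul_snd, dotProduct_smul, smul_eq_mul, Pi.smul_apply,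
      RingHom.id_apply]
    ring

lemma affineEval_injective {p : Fin n → Fin r → ℝ} (hdim : affineSpan ℝ (Set.range p) = ⊤) :
    Function.Injective (affineEval p) := by
  rw [← LinearMap.ker_eq_bot, LinearMap.ker_eq_bot']
  rintro ⟨c, c₀⟩ h
  have hval : ∀ i, p i ⬝ᵥ c + c₀ = 0 := congrFun h
  obtain ⟨_, i₀, rfl⟩ := AffineSubspace.nonempty_of_affineSpan_eq_top ℝ _ _ hdim
  have hc : c = 0 := by
    refine eq_zero_of_forall_sub_dotProduct_eq_zero hdim (Set.mem_range_self i₀) ?_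
    rintro _ ⟨i, rfl⟩
    rw [sub_dotProduct]
    linarith [hval i, hval i₀]
  have hc₀ : c₀ = 0 := by simpa [hc] using hval i₀
  rw [hc, hc₀, Prod.mk_zero_zero]

lemma range_affineEval_eq_ker_stressMatrix {ω : Fin n → Fin n → ℝ} {p : Fin n → Fin r → ℝ}
    (hdiag : ∀ i, ω i i = 0) (hequil : ∀ i, ∑ j, ω i j • (p i - p j) = 0)
    (hdim : affineSpan ℝ (Set.range p) = ⊤) (hrank : (stressMatrix ω).rank = n - r - 1) :
    LinearMap.range (affineEval p) = LinearMap.ker (stressMatrix ω).mulVecLin := by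
  have hle : LinearMap.range (affineEval p) ≤ LinearMap.ker (stressMatrix ω).mulVecLin := by
    rintro _ ⟨⟨c, c₀⟩, rfl⟩
    exact stressMatrix_mulVec_affine hdiag hequil c c₀
  have hrange : Module.finrank ℝ (LinearMap.range (affineEval p)) = r + 1 := by
    rw [LinearMap.finrank_range_of_inj (affineEval_injective hdim)]
    simp
  have hrn : r + 1 ≤ n := by
    simpa [hrange] using Submodule.finrank_le (LinearMap.range (affineEval p))
  have hker := LinearMap.finrank_range_add_finrank_ker (stressMatrix ω).mulVecLin
  rw [← Matrix.rank, hrank, Module.finrank_fin_fun] at hker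
  exact Submodule.eq_of_le_of_finrank_le hle (by omega)

lemma exists_eq_mulVec_add_of_forall_mem_range_affineEval {s : ℕ} {p : Fin n → Fin r → ℝ}
    {q : Fin n → Fin s → ℝ} (hq : ∀ k, (fun i => q i k) ∈ LinearMap.range (affineEval p)) :
    ∃ (A : Matrix (Fin s) (Fin r) ℝ) (b : Fin s → ℝ), ∀ i, q i = A *ᵥ p i + b := by
  choose a ha using hq
  refine ⟨Matrix.of fun k => (a k).1, fun k => (a k).2, fun i => funext fun k => ?_⟩
  rw [← congrFun (ha k) i]
  simp only [affineEval, LinearMap.coe_mk, AddHom.coe_mk, Pi.add_apply, mulVec, of_apply,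
    dotProduct_comm]

end AffineImage

section SymmetricMatrix

variable {n r : ℕ} {ω : Fin n → Fin n → ℝ} {p : Fin n → Fin r → ℝ} {M : Matrix (Fin r) (Fin r) ℝ}

lemma stressMatrix_mulVec_quadForm_eq_zero (hM : M.IsSymm) (hdiag : ∀ i, ω i i = 0)
    (hequil : ∀ i, ∑ j, ω i j • (p i - p j) = 0)
    (hω : ∀ i j, ω i j ≠ 0 → (p i - p j) ⬝ᵥ M *ᵥ (p i - p j) = 0) :
    stressMatrix ω *ᵥ (fun i => p i ⬝ᵥ M *ᵥ p i) = 0 := by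
  funext i
  have hterm : ∀ j, ω i j * (p i ⬝ᵥ M *ᵥ p i - p j ⬝ᵥ M *ᵥ p j)
      = 2 * ((ω i j • (p i - p j)) ⬝ᵥ M *ᵥ p i) := by
    intro j
    by_cases h : ω i j = 0
    · simp [h]
    · have hexp := dotProduct_mulVec_sub_sub hM (p i) (p i - p j)
      rw [sub_sub_cancel, hω i j h] at hexp
      rw [hexp, smul_dotProduct, smul_eq_mul]
      ring
  rw [stressMatrix_mulVec_apply hdiag, Finset.sum_congr rfl fun j _ => hterm j, ← Finset.mul_sum,
    ← sum_dotProduct, hequil i, zero_dotProduct, mul_zero, Pi.zero_apply]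

lemma two_smul_mulVec_eq_of_quadForm_affine (hM : M.IsSymm) {c : Fin r → ℝ} {c₀ : ℝ}
    (hQ : ∀ i, p i ⬝ᵥ M *ᵥ p i = p i ⬝ᵥ c + c₀) {N : Set (Fin n)} {i : Fin n}
    (hN : ∀ j ∈ N, (p i - p j) ⬝ᵥ M *ᵥ (p i - p j) = 0)
    (hspan : affineSpan ℝ (insert (p i) (p '' N)) = ⊤) :
    (2 : ℝ) • M *ᵥ p i = c := by
  rw [← sub_eq_zero]
  refine eq_zero_of_forall_sub_dotProduct_eq_zero hspan (Set.mem_insert _ _) ?_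
  rintro _ (rfl | ⟨j, hj, rfl⟩)
  · rw [sub_self, zero_dotProduct]
  · have hexp := dotProduct_mulVec_sub_sub hM (p i) (p i - p j)
    rw [sub_sub_cancel, hN j hj, hQ, hQ] at hexp
    simp only [sub_dotProduct, dotProduct_sub, dotProduct_smul, smul_eq_mul] at hexp ⊢
    linarith

theorem mulVec_eq_of_quadForm_edge_eq_zero (hM : M.IsSymm) (hdiag : ∀ i, ω i i = 0)
    (hequil : ∀ i, ∑ j, ω i j • (p i - p j) = 0)
    (hker : LinearMap.ker (stressMatrix ω).mulVecLin ≤ LinearMap.range (affineEval p))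
    (hω : ∀ i j, ω i j ≠ 0 → (p i - p j) ⬝ᵥ M *ᵥ (p i - p j) = 0) {N : Fin n → Set (Fin n)}
    (hN : ∀ i, ∀ j ∈ N i, (p i - p j) ⬝ᵥ M *ᵥ (p i - p j) = 0)
    (hspan : ∀ i, affineSpan ℝ (insert (p i) (p '' N i)) = ⊤) (i j : Fin n) :
    M *ᵥ p i = M *ᵥ p j := by
  obtain ⟨⟨c, c₀⟩, hc⟩ := hker (stressMatrix_mulVec_quadForm_eq_zero hM hdiag hequil hω)
  have hgrad : ∀ i, (2 : ℝ) • M *ᵥ p i = c := fun i =>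
    two_smul_mulVec_eq_of_quadForm_affine hM (fun i => (congrFun hc i).symm) (hN i) (hspan i)
  exact smul_right_injective _ two_ne_zero ((hgrad i).trans (hgrad j).symm)

end SymmetricMatrix

theorem statement2_general {n r : ℕ}
    (B C S : Set (Fin n × Fin n)) (hG : TensegrityGraph B C S)
    (p : Fin n → Fin r → ℝ)
    (hdim : affineSpan ℝ (Set.range p) = ⊤)
    (ω : Fin n → Fin n → ℝ)
    (hstress : IsStress (B ∪ C ∪ S) p ω)
    (hproper : IsProperStress C S ω)
    (hpsd : (stressMatrix ω).PosSemidef)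
    (hrank : (stressMatrix ω).rank = n - r - 1)
    (hspan : ∀ i : Fin n,
      affineSpan ℝ (insert (p i) (p '' {j | (i, j) ∈ B ∨
        ((i, j) ∈ C ∧ ω i j ≠ 0) ∨ ((i, j) ∈ S ∧ ω i j ≠ 0)})) = ⊤) :
    UniversallyRigid B C S p := by
  obtain ⟨-, -, -, hloop, -⟩ := hG
  obtain ⟨hsymm, hsupp, hequil⟩ := hstress
  have hdiag : ∀ i, ω i i = 0 := fun i => hsupp i i (hloop i)
  intro s q hdom
  obtain ⟨hqker, hstressed⟩ :=
    hdom.stressMatrix_mulVec_eq_zero_and_sqDist_eq ⟨hsymm, hsupp, hequil⟩ hdiag hproper hpsd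
  have hker := range_affineEval_eq_ker_stressMatrix hdiag hequil hdim hrank
  obtain ⟨A, b, hq⟩ := exists_eq_mulVec_add_of_forall_mem_range_affineEval fun k => by
    rw [hker]
    exact hqker k
  have hdist : ∀ i j, sqDist (q i) (q j) - sqDist (p i) (p j)
      = (p i - p j) ⬝ᵥ (Aᵀ * A - 1) *ᵥ (p i - p j) := fun i j => by
    rw [hq, hq, sqDist_mulVec_add_sub_sqDist]
  have hedge : ∀ i j, sqDist (q i) (q j) = sqDist (p i) (p j) →
      (p i - p j) ⬝ᵥ (Aᵀ * A - 1) *ᵥ (p i - p j) = 0 := fun i j h => by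
    rw [← hdist, h, sub_self]
  have hfix := mulVec_eq_of_quadForm_edge_eq_zero (isSymm_transpose_mul_self_sub_one A) hdiag
    hequil hker.ge (fun i j h => hedge i j (hstressed i j h)) (fun i j hj => hedge i j (by
      rcases hj with hB | ⟨-, h⟩ | ⟨-, h⟩
      exacts [hdom.1 _ hB, hstressed i j h, hstressed i j h])) hspan
  intro i j
  rw [← sub_eq_zero, hdist, mulVec_sub, hfix i j, sub_self, dotProduct_zero]

/-- tensegrity framework with proper PSD stress matrix of rank `n-r-1`
such that each point together with its neighbors via bars and stressed cables/struts
affinely spans `ℝ^r` is universally rigid. -/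
theorem statement2 {n r : ℕ} (hr : r ≤ n - 2)
    (B C S : Set (Fin n × Fin n)) (hG : TensegrityGraph B C S)
    (p : Fin n → Fin r → ℝ)
    (hdim : affineSpan ℝ (Set.range p) = ⊤)
    (ω : Fin n → Fin n → ℝ)
    (hstress : IsStress (B ∪ C ∪ S) p ω)
    (hproper : IsProperStress C S ω)
    (hpsd : (stressMatrix ω).PosSemidef)
    (hrank : (stressMatrix ω).rank = n - r - 1)
    (hspan : ∀ i : Fin n,
      affineSpan ℝ (insert (p i) (p '' {j | (i, j) ∈ B ∨
        ((i, j) ∈ C ∧ ω i j ≠ 0) ∨ ((i, j) ∈ S ∧ ω i j ≠ 0)})) = ⊤) :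
    UniversallyRigid B C S p :=
  statement2_general B C S hG p hdim ω hstress hproper hpsd hrank hspan
end
end

section
/- Let (G,p) be an r-dimensional tensegrity framework in ℝ^r with a proper stress ω (with proper stress matrix Ω) and let Z be a Gale matrix of (G,p). Then there exists a tensegrity framework (G,p') affinely-dominated by, but not congruent to, (G,p) if and only if there exist a non-zero y = (y_ij) ∈ ℝ^{|Ē|+|C⁰|+|S⁰|} with y_ij ≥ 0 for all {i,j} ∈ C⁰ and y_ij ≤ 0 for all {i,j} ∈ S⁰, and a vector ξ ∈ ℝ^{n−r−1}, such that ℰ⁰(y) Z = e ξ^T, where ℰ⁰(y) = Σ_{{i,j} ∈ Ē ∪ C⁰ ∪ S⁰} y_ij E^{ij}, C⁰ = {{i,j}∈C : ω_ij = 0} and S⁰ = {{i,j}∈S : ω_ij = 0}. -/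
open Matrix BigOperators

noncomputable section

lemma sqDist_mulVec_add {r : ℕ} (A : Matrix (Fin r) (Fin r) ℝ) (b u v : Fin r → ℝ) :
    sqDist (A *ᵥ u + b) (A *ᵥ v + b) = sqDist u v + (u - v) ⬝ᵥ ((Aᵀ * A - 1) *ᵥ (u - v)) := by
  have h : A *ᵥ u + b - (A *ᵥ v + b) = A *ᵥ (u - v) := by rw [mulVec_sub]; abel
  have hA : (u - v) ⬝ᵥ ((Aᵀ * A) *ᵥ (u - v)) = (A *ᵥ (u - v)) ⬝ᵥ (A *ᵥ (u - v)) := by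
    rw [← mulVec_mulVec, dotProduct_mulVec, vecMul_transpose]
  rw [sqDist_eq_dotProduct, sqDist_eq_dotProduct, h, sub_mulVec, one_mulVec,
    dotProduct_sub (u - v) ((Aᵀ * A) *ᵥ (u - v)), hA]
  ring

def edgeForm {ι : Type*} {r : ℕ} (Ψ : Matrix (Fin r) (Fin r) ℝ) (p : ι → Fin r → ℝ) (i j : ι) : ℝ :=
  (p i - p j) ⬝ᵥ (Ψ *ᵥ (p i - p j))

section edgeForm

variable {ι : Type*} {r : ℕ} (Ψ : Matrix (Fin r) (Fin r) ℝ) (p : ι → Fin r → ℝ)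

lemma edgeForm_eq (i j : ι) : edgeForm Ψ p i j =
    p i ⬝ᵥ (Ψ *ᵥ p i) - p i ⬝ᵥ (Ψ *ᵥ p j) - p j ⬝ᵥ (Ψ *ᵥ p i) + p j ⬝ᵥ (Ψ *ᵥ p j) := by
  simp only [edgeForm, mulVec_sub, dotProduct_sub, sub_dotProduct]
  ring

lemma edgeForm_comm (i j : ι) : edgeForm Ψ p i j = edgeForm Ψ p j i := by
  rw [edgeForm_eq, edgeForm_eq]
  ring

@[simp]
lemma edgeForm_self (i : ι) : edgeForm Ψ p i i = 0 := by
  simp [edgeForm]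

end edgeForm

lemma IsStress.sum_mul_dotProduct_eq_zero {n r : ℕ} {E : Set (Fin n × Fin n)}
    {p : Fin n → Fin r → ℝ} {ω : Fin n → Fin n → ℝ} (h : IsStress E p ω) (i : Fin n)
    (v : Fin r → ℝ) : ∑ j, ω i j * ((p i - p j) ⬝ᵥ v) = 0 := by
  simpa [sum_dotProduct, smul_dotProduct] using congrArg (· ⬝ᵥ v) (h.2.2 i)

lemma IsStress.sum_mul_edgeForm_eq_zero {n r : ℕ} {E : Set (Fin n × Fin n)}
    {p : Fin n → Fin r → ℝ} {ω : Fin n → Fin n → ℝ} (h : IsStress E p ω)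
    (Ψ : Matrix (Fin r) (Fin r) ℝ) : ∑ i, ∑ j, ω i j * edgeForm Ψ p i j = 0 := by
  have hsplit : ∀ i j, ω i j * edgeForm Ψ p i j =
      ω i j * ((p i - p j) ⬝ᵥ (Ψ *ᵥ p i)) + ω j i * ((p j - p i) ⬝ᵥ (Ψ *ᵥ p j)) := by
    intro i j
    rw [h.1 j i, edgeForm, mulVec_sub, dotProduct_sub, ← neg_sub (p i) (p j), neg_dotProduct]
    ring
  simp only [hsplit, Finset.sum_add_distrib, h.sum_mul_dotProduct_eq_zero, zero_add]
  rw [Finset.sum_comm]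
  simp only [h.sum_mul_dotProduct_eq_zero, Finset.sum_const_zero]

lemma mul_sqDist_sub_nonpos_of_dominates {n r s : ℕ} {B C S : Set (Fin n × Fin n)}
    {ω : Fin n → Fin n → ℝ} (hω : ∀ i j, (i, j) ∉ B ∪ C ∪ S → ω i j = 0)
    (hproper : IsProperStress C S ω) {p : Fin n → Fin r → ℝ} {q : Fin n → Fin s → ℝ}
    (hdom : Dominates B C S p q) (i j : Fin n) :
    ω i j * (sqDist (q i) (q j) - sqDist (p i) (p j)) ≤ 0 := by
  by_cases hB : (i, j) ∈ B
  · rw [hdom.1 _ hB, sub_self, mul_zero]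
  by_cases hC : (i, j) ∈ C
  · exact mul_nonpos_of_nonneg_of_nonpos (hproper.1 _ hC) (sub_nonpos.2 (hdom.2.1 _ hC))
  by_cases hS : (i, j) ∈ S
  · exact mul_nonpos_of_nonpos_of_nonneg (hproper.2 _ hS) (sub_nonneg.2 (hdom.2.2 _ hS))
  rw [hω i j (by simp [hB, hC, hS]), zero_mul]

/-- The pairs of `Ē ∪ C⁰ ∪ S⁰`: missing edges, and cables and struts on which `ω` vanishes. -/
def IsFreePair {n : ℕ} (B C S : Set (Fin n × Fin n)) (ω : Fin n → Fin n → ℝ) (i j : Fin n) :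
    Prop :=
  (i, j) ∉ B ∪ C ∪ S ∨ ((i, j) ∈ C ∧ ω i j = 0) ∨ ((i, j) ∈ S ∧ ω i j = 0)

lemma edgeForm_eq_zero_of_not_isFreePair {n r : ℕ} {B C S : Set (Fin n × Fin n)}
    {p : Fin n → Fin r → ℝ} {ω : Fin n → Fin n → ℝ} (hstress : IsStress (B ∪ C ∪ S) p ω)
    (hproper : IsProperStress C S ω) {A : Matrix (Fin r) (Fin r) ℝ} {b : Fin r → ℝ}
    (hdom : Dominates B C S p fun i => A *ᵥ p i + b) {i j : Fin n}
    (hij : ¬ IsFreePair B C S ω i j) : edgeForm (Aᵀ * A - 1) p i j = 0 := by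
  have hdist : ∀ i j, sqDist (A *ᵥ p i + b) (A *ᵥ p j + b) - sqDist (p i) (p j) =
      edgeForm (Aᵀ * A - 1) p i j := fun i j => by
    rw [sqDist_mulVec_add, add_sub_cancel_left, edgeForm]
  have hterm := mul_sqDist_sub_nonpos_of_dominates hstress.2.1 hproper hdom
  simp only [hdist] at hterm
  have hzero : ω i j * edgeForm (Aᵀ * A - 1) p i j = 0 := by
    have hsum := hstress.sum_mul_edgeForm_eq_zero (Aᵀ * A - 1)
    rw [Finset.sum_eq_zero_iff_of_nonpos fun i _ =>
      Finset.sum_nonpos fun j _ => hterm i j] at hsum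
    exact (Finset.sum_eq_zero_iff_of_nonpos fun j _ => hterm i j).1
      (hsum i (Finset.mem_univ _)) j (Finset.mem_univ _)
  by_cases hω : ω i j = 0
  · have hmem : (i, j) ∈ B ∪ C ∪ S := not_not.1 fun h => hij (Or.inl h)
    rcases hmem with (hB | hC) | hS
    · rw [← hdist, hdom.1 _ hB, sub_self]
    · exact (hij (Or.inr (Or.inl ⟨hC, hω⟩))).elim
    · exact (hij (Or.inr (Or.inr ⟨hS, hω⟩))).elim
  · exact (mul_eq_zero.1 hzero).resolve_left hω

lemma EscrY_apply {n : ℕ} (y : Fin n → Fin n → ℝ) (a b : Fin n) :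
    EscrY y a b = y a b + y b a := by
  simp [EscrY, Emat, Matrix.sum_apply, vecMulVec_apply, Pi.single_apply, Finset.sum_add_distrib]

lemma EscrY_ite_lt {n : ℕ} (D : Fin n → Fin n → Prop) [DecidableRel D]
    {f : Fin n → Fin n → ℝ} (hsymm : ∀ i j, f i j = f j i) (hdiag : ∀ i, f i i = 0)
    (hD : ∀ i j, ¬ D i j → f i j = 0) :
    EscrY (fun i j => if i < j ∧ D i j then f i j else 0) = of f := by
  have hD' : ∀ i j, (if i < j ∧ D i j then f i j else 0) = if i < j then f i j else 0 := by
    intro i j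
    by_cases h : D i j <;> simp [h, hD]
  ext a b
  rw [EscrY_apply, hD', hD', of_apply]
  rcases lt_trichotomy a b with h | rfl | h
  · simp [h, h.not_gt]
  · simp [hdiag]
  · simp [h, h.not_gt, hsymm a b]

lemma IsGaleMatrix.sum_smul_eq_zero {n r m : ℕ} {p : Fin n → Fin r → ℝ}
    {Z : Matrix (Fin n) (Fin m) ℝ} (hZ : IsGaleMatrix (of p) Z) (k : Fin m) :
    ∑ b, Z b k • p b = 0 := by
  ext l
  simpa [mulVec, dotProduct, mul_comm] using congrFun (hZ.1 k) l

lemma IsGaleMatrix.of_edgeForm_mul {n r m : ℕ} {p : Fin n → Fin r → ℝ}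
    {Z : Matrix (Fin n) (Fin m) ℝ} (hZ : IsGaleMatrix (of p) Z) (Ψ : Matrix (Fin r) (Fin r) ℝ) :
    of (edgeForm Ψ p) * Z =
      vecMulVec (fun _ => 1) (fun k => ∑ b, (p b ⬝ᵥ (Ψ *ᵥ p b)) * Z b k) := by
  ext a k
  have h1 : ∑ b, (p a ⬝ᵥ (Ψ *ᵥ p b)) * Z b k = 0 := by
    simpa [mulVec_sum, dotProduct_sum, mulVec_smul, mul_comm] using
      congrArg (fun v => p a ⬝ᵥ (Ψ *ᵥ v)) (hZ.sum_smul_eq_zero k)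
  have h2 : ∑ b, (p b ⬝ᵥ (Ψ *ᵥ p a)) * Z b k = 0 := by
    simpa [sum_dotProduct, mul_comm] using
      congrArg (· ⬝ᵥ (Ψ *ᵥ p a)) (hZ.sum_smul_eq_zero k)
  simp only [mul_apply, of_apply, edgeForm_eq, vecMulVec_apply, one_mul, sub_mul, add_mul,
    Finset.sum_add_distrib, Finset.sum_sub_distrib, ← Finset.mul_sum, hZ.2.1 k, h1, h2]
  ring

theorem exists_free_stress_of_affinelyDominated {n r : ℕ} {B C S : Set (Fin n × Fin n)}
    {p p' : Fin n → Fin r → ℝ} {ω : Fin n → Fin n → ℝ} (hstress : IsStress (B ∪ C ∪ S) p ω)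
    (hproper : IsProperStress C S ω) {m : ℕ} {Z : Matrix (Fin n) (Fin m) ℝ}
    (hZ : IsGaleMatrix (of p) Z) (hp' : AffinelyDominated B C S p p')
    (hnc : ¬ FrameworkCongruent p p') :
    ∃ y : Fin n → Fin n → ℝ, y ≠ 0 ∧ (∀ i j, y i j ≠ 0 → i < j ∧ IsFreePair B C S ω i j) ∧
      (∀ i j, (i, j) ∈ C → ω i j = 0 → 0 ≤ y i j) ∧
      (∀ i j, (i, j) ∈ S → ω i j = 0 → y i j ≤ 0) ∧
      ∃ ξ : Fin m → ℝ, EscrY y * Z = vecMulVec (fun _ => 1) ξ := by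
  classical
  obtain ⟨hdom, A, b, hAb⟩ := hp'
  obtain rfl : p' = fun i => A *ᵥ p i + b := funext hAb
  set q := edgeForm (Aᵀ * A - 1) p
  have hdist : ∀ i j, sqDist (A *ᵥ p i + b) (A *ᵥ p j + b) = sqDist (p i) (p j) + q i j :=
    fun i j => sqDist_mulVec_add _ _ _ _
  set y : Fin n → Fin n → ℝ :=
    fun i j => if i < j ∧ IsFreePair B C S ω i j then -q i j / 2 else 0
  have hy : EscrY y = of fun i j => -q i j / 2 :=
    EscrY_ite_lt _ (fun i j => by simp only [q]; rw [edgeForm_comm]) (fun i => by simp [q])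
      fun i j h => by simp [q, edgeForm_eq_zero_of_not_isFreePair hstress hproper hdom h]
  refine ⟨y, fun hy0 => hnc fun i j => ?_, fun i j h => ?_, fun i j hC _ => ?_,
    fun i j hS _ => ?_, ?_⟩
  · have hij := congrFun (congrFun hy i) j
    simp only [hy0, EscrY, Pi.zero_apply, zero_smul, Finset.sum_const_zero, Matrix.zero_apply,
      of_apply] at hij
    rw [hdist, show q i j = 0 by linarith, add_zero]
  · by_contra hc
    exact h (if_neg hc)
  · have := hdom.2.1 _ hC
    simp only [y]
    split_ifs <;> linarith [hdist i j]
  · have := hdom.2.2 _ hS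
    simp only [y]
    split_ifs <;> linarith [hdist i j]
  · refine ⟨-(1 / 2 : ℝ) • fun k => ∑ b, (p b ⬝ᵥ ((Aᵀ * A - 1) *ᵥ p b)) * Z b k, ?_⟩
    have hq : (of fun i j => -q i j / 2) = -(1 / 2 : ℝ) • of q := by
      ext
      simp only [of_apply, Matrix.smul_apply, smul_eq_mul]
      ring
    rw [hy, hq, smul_mul, hZ.of_edgeForm_mul, vecMulVec_smul]

lemma injective_mulVec_of_affineSpan_eq_top {ι : Type*} {r : ℕ} {p : ι → Fin r → ℝ}
    (h : affineSpan ℝ (Set.range p) = ⊤) : Function.Injective (of p).mulVec := by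
  refine (injective_iff_map_eq_zero (of p).mulVecLin).2 fun w hw => ?_
  have hle : affineSpan ℝ (Set.range p) ≤
      (LinearMap.ker (dotProductBilin ℝ ℝ w)).toAffineSubspace := by
    rw [affineSpan_le]
    rintro _ ⟨i, rfl⟩
    simpa [dotProductBilin, dotProduct_comm, mulVec] using congrFun hw i
  rw [h, top_le_iff] at hle
  have hw : w ∈ (LinearMap.ker (dotProductBilin ℝ ℝ w)).toAffineSubspace := hle ▸ trivial
  simpa [dotProductBilin] using hw

lemma IsGaleMatrix.exists_mulVec_eq {n r m : ℕ} {P : Matrix (Fin n) (Fin r) ℝ}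
    {Z : Matrix (Fin n) (Fin m) ℝ} (hZ : IsGaleMatrix P Z) (hP : IsUnit (Pᵀ * P))
    (hcentroid : ∀ k, ∑ i, P i k = 0) {c : Fin n → ℝ} (hc : ∑ i, c i = 0) (hcZ : c ᵥ* Z = 0) :
    ∃ w, c = P *ᵥ w := by
  set w := (Pᵀ * P)⁻¹ *ᵥ (Pᵀ *ᵥ c)
  set d := c - P *ᵥ w
  have hPd : Pᵀ *ᵥ d = 0 := by
    simp only [d, w, mulVec_sub, mulVec_mulVec, ← Matrix.mul_assoc,
      mul_nonsing_inv _ ((Pᵀ * P).isUnit_iff_isUnit_det.1 hP), Matrix.one_mul, sub_self]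
  have hd : ∑ i, d i = 0 := by
    have : ∑ i, (P *ᵥ w) i = 0 := by
      simp only [mulVec, dotProduct]
      rw [Finset.sum_comm]
      simp [← Finset.sum_mul, hcentroid]
    simp [d, Finset.sum_sub_distrib, hc, this]
  have hdZ : d ᵥ* Z = 0 := by
    have hPZ : Pᵀ * Z = 0 := by
      ext l k
      simpa [mulVec, dotProduct, mul_apply] using congrFun (hZ.1 k) l
    rw [sub_vecMul, hcZ, ← vecMul_transpose, vecMul_vecMul, hPZ]
    simp
  obtain ⟨a, ha⟩ := (Submodule.mem_span_range_iff_exists_fun ℝ).1 (hZ.2.2.2 d hPd hd)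
  have hdd : d ⬝ᵥ d = 0 := by
    have hcol : ∀ k, (fun i => Z i k) ⬝ᵥ d = 0 := fun k => by
      rw [dotProduct_comm]; exact congrFun hdZ k
    nth_rewrite 1 [← ha]
    simp [sum_dotProduct, smul_dotProduct, hcol]
  exact ⟨w, sub_eq_zero.1 (dotProduct_self_eq_zero.1 hdd)⟩

lemma IsGaleMatrix.exists_eq_mul {n r m : ℕ} {P : Matrix (Fin n) (Fin r) ℝ}
    {Z : Matrix (Fin n) (Fin m) ℝ} (hZ : IsGaleMatrix P Z) (hP : IsUnit (Pᵀ * P))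
    (hcentroid : ∀ k, ∑ i, P i k = 0) {ι : Type*} {M : Matrix (Fin n) ι ℝ}
    (hM : (fun _ => 1) ᵥ* M = 0) (hMZ : Zᵀ * M = 0) : ∃ K : Matrix (Fin r) ι ℝ, M = P * K := by
  have hcol : ∀ a, ∃ w, (fun b => M b a) = P *ᵥ w := fun a =>
    hZ.exists_mulVec_eq hP hcentroid (by simpa [vecMul, dotProduct] using congrFun hM a)
      (funext fun k => by
        simpa [vecMul, dotProduct, mul_apply, mul_comm] using congrFun (congrFun hMZ k) a)
  choose w hw using hcol
  exact ⟨of fun k a => w a k, by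
    ext b a
    rw [mul_apply]
    simpa [mulVec, dotProduct] using congrFun (hw a) b⟩

lemma exists_isSymm_eq_mul_mul_transpose {R : Type*} [CommRing R] {m k : Type*} [Fintype m]
    [Fintype k] [DecidableEq k] {P : Matrix m k R} {L : Matrix k m R} (hL : L * P = 1)
    {M : Matrix m m R} (hM : M.IsSymm) {K : Matrix k m R} (hK : M = P * K) :
    ∃ Ψ : Matrix k k R, Ψ.IsSymm ∧ M = P * Ψ * Pᵀ := by
  have hPL : P * L * M = M := by
    rw [hK, Matrix.mul_assoc, ← Matrix.mul_assoc L, hL, Matrix.one_mul]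
  refine ⟨L * M * Lᵀ, ?_, ?_⟩
  · simp [IsSymm, transpose_mul, hM.eq, Matrix.mul_assoc]
  · calc M = (P * L * M)ᵀ := by rw [hPL, hM.eq]
      _ = M * Lᵀ * Pᵀ := by simp [transpose_mul, hM.eq, Matrix.mul_assoc]
      _ = P * (L * M * Lᵀ) * Pᵀ := by nth_rewrite 1 [← hPL]; simp only [Matrix.mul_assoc]

lemma transpose_of_mulVec_single_sub_single {ι : Type*} [Fintype ι] [DecidableEq ι] {r : ℕ}
    (p : ι → Fin r → ℝ) (i j : ι) :
    (of p)ᵀ *ᵥ (Pi.single i 1 - Pi.single j 1) = p i - p j := by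
  ext l
  simp [mulVec, dotProduct, Pi.single_apply, mul_sub, Finset.sum_sub_distrib]

lemma edgeForm_eq_dotProduct_mulVec {ι : Type*} [Fintype ι] [DecidableEq ι] {r : ℕ}
    (Ψ : Matrix (Fin r) (Fin r) ℝ) (p : ι → Fin r → ℝ) (i j : ι) :
    edgeForm Ψ p i j = (Pi.single i 1 - Pi.single j 1) ⬝ᵥ
      ((of p * Ψ * (of p)ᵀ) *ᵥ (Pi.single i 1 - Pi.single j 1)) := by
  rw [← mulVec_mulVec, ← mulVec_mulVec, dotProduct_mulVec, ← mulVec_transpose,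
    transpose_of_mulVec_single_sub_single, edgeForm]

lemma dotProduct_mulVec_single_sub_single {ι : Type*} [Fintype ι] [DecidableEq ι]
    (M : Matrix ι ι ℝ) (i j : ι) :
    (Pi.single i 1 - Pi.single j 1) ⬝ᵥ (M *ᵥ (Pi.single i 1 - Pi.single j 1)) =
      M i i - M i j - M j i + M j j := by
  simp only [mulVec_sub, dotProduct_sub, sub_dotProduct, mulVec_single_one, single_one_dotProduct,
    col_apply]
  ring

/-- `J = I - e eᵀ / n`. Conjugating by it turns `ℰ(y)` into `ℰ(y) + x eᵀ + e xᵀ` with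
`x = xvec y`. -/
def centeringMatrix (n : ℕ) : Matrix (Fin n) (Fin n) ℝ :=
  1 - (n : ℝ)⁻¹ • vecMulVec (fun _ => 1) (fun _ => 1)

section centeringMatrix

variable {n : ℕ}

lemma centeringMatrix_isSymm : (centeringMatrix n).IsSymm := by
  simp [centeringMatrix, IsSymm, transpose_sub, transpose_smul]

lemma centeringMatrix_mulVec_of_sum_eq_zero {v : Fin n → ℝ} (hv : ∑ i, v i = 0) :
    centeringMatrix n *ᵥ v = v := by
  simp [centeringMatrix, sub_mulVec, smul_mulVec, vecMulVec_mulVec, dotProduct, hv]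

lemma one_vecMul_centeringMatrix (hn : n ≠ 0) : (fun _ => 1) ᵥ* centeringMatrix n = 0 := by
  ext i
  simp [centeringMatrix, vecMul_sub, vecMul_smul, vecMul_vecMulVec, dotProduct, hn]

lemma transpose_mul_centeringMatrix {m : ℕ} {Z : Matrix (Fin n) (Fin m) ℝ}
    (hZ : ∀ k, ∑ i, Z i k = 0) : Zᵀ * centeringMatrix n = Zᵀ := by
  have : Zᵀ *ᵥ (fun _ => 1) = 0 := by ext k; simpa [mulVec, dotProduct] using hZ k
  simp [centeringMatrix, Matrix.mul_sub, Matrix.mul_smul, mul_vecMulVec, this]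

lemma dotProduct_mulVec_centeringMatrix_conj (A : Matrix (Fin n) (Fin n) ℝ)
    {v : Fin n → ℝ} (hv : ∑ i, v i = 0) :
    v ⬝ᵥ ((centeringMatrix n * A * centeringMatrix n) *ᵥ v) = v ⬝ᵥ (A *ᵥ v) := by
  rw [← mulVec_mulVec, ← mulVec_mulVec, centeringMatrix_mulVec_of_sum_eq_zero hv,
    dotProduct_mulVec, ← mulVec_transpose, centeringMatrix_isSymm.eq,
    centeringMatrix_mulVec_of_sum_eq_zero hv]

end centeringMatrix

lemma abs_mul_le_dotProduct_self {m : Type*} [Fintype m] (v : m → ℝ) (i j : m) :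
    |v i * v j| ≤ v ⬝ᵥ v := by
  have hsq : ∀ i, v i ^ 2 ≤ v ⬝ᵥ v := fun i => by
    simpa [dotProduct, pow_two] using
      Finset.single_le_sum (fun i _ => mul_self_nonneg (v i)) (Finset.mem_univ i)
  have := hsq i
  have := hsq j
  rw [abs_mul]
  nlinarith [sq_nonneg (|v i| - |v j|), sq_abs (v i), sq_abs (v j)]

lemma abs_dotProduct_mulVec_le {m : Type*} [Fintype m] (Ψ : Matrix m m ℝ) (v : m → ℝ) :
    |v ⬝ᵥ (Ψ *ᵥ v)| ≤ (∑ i, ∑ j, |Ψ i j|) * (v ⬝ᵥ v) := by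
  calc |v ⬝ᵥ (Ψ *ᵥ v)| = |∑ i, ∑ j, Ψ i j * (v i * v j)| := by
        simp only [dotProduct, mulVec, Finset.mul_sum]
        congr 1
        refine Finset.sum_congr rfl fun i _ => Finset.sum_congr rfl fun j _ => ?_
        ring
    _ ≤ ∑ i, ∑ j, |Ψ i j * (v i * v j)| :=
        (Finset.abs_sum_le_sum_abs _ _).trans
          (Finset.sum_le_sum fun i _ => Finset.abs_sum_le_sum_abs _ _)
    _ ≤ ∑ i, ∑ j, |Ψ i j| * (v ⬝ᵥ v) := by
        gcongr with i _ j _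
        rw [abs_mul]
        exact mul_le_mul_of_nonneg_left (abs_mul_le_dotProduct_self v i j) (abs_nonneg _)
    _ = (∑ i, ∑ j, |Ψ i j|) * (v ⬝ᵥ v) := by simp only [Finset.sum_mul]

open scoped MatrixOrder in
lemma exists_transpose_mul_self_eq_one_add_smul {m : Type*} [Fintype m] [DecidableEq m]
    {Ψ : Matrix m m ℝ} (hΨ : Ψ.IsSymm) :
    ∃ t : ℝ, 0 < t ∧ ∃ A : Matrix m m ℝ, Aᵀ * A = 1 + t • Ψ := by
  set c := ∑ i, ∑ j, |Ψ i j|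
  have hc : 0 ≤ c := by positivity
  refine ⟨(c + 1)⁻¹, by positivity, ?_⟩
  have hpsd : (1 + (c + 1)⁻¹ • Ψ).PosSemidef := by
    refine PosSemidef.of_dotProduct_mulVec_nonneg ?_ fun v => ?_
    · simp [IsHermitian, conjTranspose_eq_transpose_of_trivial, transpose_add, hΨ.eq]
    · have hv : 0 ≤ v ⬝ᵥ v := Finset.sum_nonneg fun i _ => mul_self_nonneg (v i)
      have hΨv : -(c * (v ⬝ᵥ v)) ≤ v ⬝ᵥ (Ψ *ᵥ v) :=
        neg_le_of_abs_le (abs_dotProduct_mulVec_le Ψ v)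
      have hpos : 0 < c + 1 := by linarith
      simp only [star_trivial, add_mulVec, one_mulVec, smul_mulVec, dotProduct_add,
        dotProduct_smul, smul_eq_mul]
      refine (mul_nonneg_iff_of_pos_left hpos).1 ?_
      rw [mul_add, mul_inv_cancel_left₀ hpos.ne']
      linarith
  obtain ⟨A, hA⟩ := CStarAlgebra.nonneg_iff_eq_star_mul_self.1 hpsd.nonneg
  exact ⟨A, by rw [hA, star_eq_conjTranspose, conjTranspose_eq_transpose_of_trivial]⟩

section freeStress

variable {n : ℕ} {B C S : Set (Fin n × Fin n)} {ω y : Fin n → Fin n → ℝ}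

lemma EscrY_isSymm : (EscrY y).IsSymm := by
  ext a b
  simp [EscrY_apply, add_comm]

lemma EscrY_ne_zero (hy : y ≠ 0) (hlt : ∀ i j, y i j ≠ 0 → i < j) : EscrY y ≠ 0 := by
  obtain ⟨i, j, hij⟩ : ∃ i j, y i j ≠ 0 := by
    by_contra! h
    exact hy (funext fun i => funext (h i))
  have hji : y j i = 0 := by
    by_contra h
    exact (hlt i j hij).asymm (hlt j i h)
  intro h
  simpa [EscrY_apply, hji, hij] using congrFun (congrFun h i) j

variable (hG : TensegrityGraph B C S)
  (hsupp : ∀ i j, y i j ≠ 0 → i < j ∧ IsFreePair B C S ω i j)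
include hG hsupp

lemma EscrY_eq_zero_of_mem_bars {i j : Fin n} (h : (i, j) ∈ B) : EscrY y i j = 0 := by
  obtain ⟨hBsymm, -, -, -, hBC, hBS, -, -⟩ := hG
  have key : ∀ a b, (a, b) ∈ B → y a b = 0 := by
    intro a b hab
    by_contra hy
    rcases (hsupp a b hy).2 with hE | ⟨hC, -⟩ | ⟨hS, -⟩
    · exact hE (Or.inl (Or.inl hab))
    · exact Set.eq_empty_iff_forall_notMem.1 hBC _ ⟨hab, hC⟩
    · exact Set.eq_empty_iff_forall_notMem.1 hBS _ ⟨hab, hS⟩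
  rw [EscrY_apply, key _ _ h, key _ _ (hBsymm _ _ h), add_zero]

lemma EscrY_nonneg_of_mem_cables (hyC : ∀ i j, (i, j) ∈ C → ω i j = 0 → 0 ≤ y i j)
    {i j : Fin n} (h : (i, j) ∈ C) : 0 ≤ EscrY y i j := by
  obtain ⟨-, hCsymm, -, -, -, -, hCS, -⟩ := hG
  have key : ∀ a b, (a, b) ∈ C → 0 ≤ y a b := by
    intro a b hab
    by_contra hy
    rcases (hsupp a b (by contrapose! hy; simp [hy])).2 with hE | ⟨-, hω⟩ | ⟨hS, -⟩
    · exact hE (Or.inl (Or.inr hab))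
    · exact hy (hyC a b hab hω)
    · exact Set.eq_empty_iff_forall_notMem.1 hCS _ ⟨hab, hS⟩
  rw [EscrY_apply]
  exact add_nonneg (key _ _ h) (key _ _ (hCsymm _ _ h))

lemma EscrY_nonpos_of_mem_struts (hyS : ∀ i j, (i, j) ∈ S → ω i j = 0 → y i j ≤ 0)
    {i j : Fin n} (h : (i, j) ∈ S) : EscrY y i j ≤ 0 := by
  obtain ⟨-, -, hSsymm, -, -, -, hCS, -⟩ := hG
  have key : ∀ a b, (a, b) ∈ S → y a b ≤ 0 := by
    intro a b hab
    by_contra hy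
    rcases (hsupp a b (by contrapose! hy; simp [hy])).2 with hE | ⟨hC, -⟩ | ⟨-, hω⟩
    · exact hE (Or.inr hab)
    · exact Set.eq_empty_iff_forall_notMem.1 hCS _ ⟨hC, hab⟩
    · exact hy (hyS a b hab hω)
  rw [EscrY_apply]
  exact add_nonpos (key _ _ h) (key _ _ (hSsymm _ _ h))

end freeStress

theorem exists_isSymm_edgeForm_eq_EscrY {n r m : ℕ} {p : Fin n → Fin r → ℝ}
    (hdim : affineSpan ℝ (Set.range p) = ⊤) (hcentroid : ∀ k, ∑ i, p i k = 0)
    {Z : Matrix (Fin n) (Fin m) ℝ} (hZ : IsGaleMatrix (of p) Z) (hn : n ≠ 0)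
    {y : Fin n → Fin n → ℝ} (hdiag : ∀ i, y i i = 0) {ξ : Fin m → ℝ}
    (hξ : EscrY y * Z = vecMulVec (fun _ => 1) ξ) :
    ∃ Ψ : Matrix (Fin r) (Fin r) ℝ, Ψ.IsSymm ∧ ∀ i j, edgeForm Ψ p i j = -2 * EscrY y i j := by
  set P := of p
  set M := centeringMatrix n * EscrY y * centeringMatrix n
  have hMsymm : M.IsSymm := by
    simp [M, IsSymm, transpose_mul, centeringMatrix_isSymm.eq, EscrY_isSymm.eq, Matrix.mul_assoc]
  have hM1 : (fun _ => 1) ᵥ* M = 0 := by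
    simp [M, ← vecMul_vecMul, one_vecMul_centeringMatrix hn]
  have hMZ : Zᵀ * M = 0 := by
    have hZE : Zᵀ * EscrY y = vecMulVec ξ (fun _ => 1) := by
      rw [← transpose_vecMulVec, ← hξ, transpose_mul, EscrY_isSymm.eq]
    rw [← Matrix.mul_assoc, ← Matrix.mul_assoc, transpose_mul_centeringMatrix hZ.2.1, hZE,
      vecMulVec_mul, one_vecMul_centeringMatrix hn]
    exact ext fun _ _ => mul_zero _
  have hPP : IsUnit (Pᵀ * P) := by
    simpa [conjTranspose_eq_transpose_of_trivial] using
      (PosDef.conjTranspose_mul_self P (injective_mulVec_of_affineSpan_eq_top hdim)).isUnit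
  obtain ⟨K, hK⟩ := hZ.exists_eq_mul hPP hcentroid hM1 hMZ
  have hL : (Pᵀ * P)⁻¹ * Pᵀ * P = 1 := by
    rw [Matrix.mul_assoc, nonsing_inv_mul _ ((Pᵀ * P).isUnit_iff_isUnit_det.1 hPP)]
  obtain ⟨Ψ, hΨ, hMΨ⟩ := exists_isSymm_eq_mul_mul_transpose hL hMsymm hK
  refine ⟨Ψ, hΨ, fun i j => ?_⟩
  have hEdiag : ∀ i, EscrY y i i = 0 := fun i => by simp [EscrY_apply, hdiag]
  rw [edgeForm_eq_dotProduct_mulVec, ← hMΨ,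
    dotProduct_mulVec_centeringMatrix_conj _ (by simp [Finset.sum_sub_distrib]),
    dotProduct_mulVec_single_sub_single, hEdiag, hEdiag, EscrY_isSymm.apply i j]
  ring

theorem exists_affinelyDominated_of_free_stress {n r m : ℕ} {B C S : Set (Fin n × Fin n)}
    (hG : TensegrityGraph B C S) {p : Fin n → Fin r → ℝ}
    (hdim : affineSpan ℝ (Set.range p) = ⊤) (hcentroid : ∀ k, ∑ i, p i k = 0)
    {ω : Fin n → Fin n → ℝ} {Z : Matrix (Fin n) (Fin m) ℝ} (hZ : IsGaleMatrix (of p) Z)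
    {y : Fin n → Fin n → ℝ} (hy : y ≠ 0)
    (hsupp : ∀ i j, y i j ≠ 0 → i < j ∧ IsFreePair B C S ω i j)
    (hyC : ∀ i j, (i, j) ∈ C → ω i j = 0 → 0 ≤ y i j)
    (hyS : ∀ i j, (i, j) ∈ S → ω i j = 0 → y i j ≤ 0) {ξ : Fin m → ℝ}
    (hξ : EscrY y * Z = vecMulVec (fun _ => 1) ξ) :
    ∃ p', AffinelyDominated B C S p p' ∧ ¬ FrameworkCongruent p p' := by
  have hn : n ≠ 0 := by
    rintro rfl
    exact hy (funext fun i => i.elim0)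
  have hdiag : ∀ i, y i i = 0 := fun i => not_not.1 fun h => (hsupp i i h).1.false
  obtain ⟨Ψ, hΨ, hedge⟩ := exists_isSymm_edgeForm_eq_EscrY hdim hcentroid hZ hn hdiag hξ
  obtain ⟨t, ht, A, hA⟩ := exists_transpose_mul_self_eq_one_add_smul hΨ
  have hdist : ∀ i j, sqDist (A *ᵥ p i + 0) (A *ᵥ p j + 0) =
      sqDist (p i) (p j) - 2 * t * EscrY y i j := fun i j => by
    rw [sqDist_mulVec_add, hA, add_sub_cancel_left, smul_mulVec, dotProduct_smul, smul_eq_mul,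
      ← edgeForm, hedge]
    ring
  refine ⟨fun i => A *ᵥ p i + 0, ⟨⟨fun e he => ?_, fun e he => ?_, fun e he => ?_⟩, A, 0,
    fun i => rfl⟩, fun hcong => EscrY_ne_zero hy (fun i j h => (hsupp i j h).1) ?_⟩
  · rw [hdist, EscrY_eq_zero_of_mem_bars hG hsupp he]
    ring
  · nlinarith [hdist e.1 e.2, EscrY_nonneg_of_mem_cables hG hsupp hyC he]
  · nlinarith [hdist e.1 e.2, EscrY_nonpos_of_mem_struts hG hsupp hyS he]
  · ext i j
    have := hcong i j
    rw [hdist] at this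
    simpa [ht.ne'] using this

/-- given a proper stress `ω`, there is a framework affinely-dominated
by but not congruent to `(G,p)` iff there are a non-zero `y` supported on
`Ē ∪ C⁰ ∪ S⁰` (with the proper signs) and `ξ` with `ℰ⁰(y) Z = e ξᵀ`. -/
theorem statement16 {n r : ℕ}
    (B C S : Set (Fin n × Fin n)) (hG : TensegrityGraph B C S)
    (p : Fin n → Fin r → ℝ)
    (hdim : affineSpan ℝ (Set.range p) = ⊤)
    (hcentroid : ∀ k, ∑ i, p i k = 0)
    (ω : Fin n → Fin n → ℝ)
    (hstress : IsStress (B ∪ C ∪ S) p ω)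
    (hproper : IsProperStress C S ω)
    (Z : Matrix (Fin n) (Fin (n - r - 1)) ℝ)
    (hZ : IsGaleMatrix (Matrix.of p) Z) :
    (∃ p' : Fin n → Fin r → ℝ,
        AffinelyDominated B C S p p' ∧ ¬ FrameworkCongruent p p') ↔
      ∃ y : Fin n → Fin n → ℝ, y ≠ 0 ∧
        (∀ i j, y i j ≠ 0 → i < j ∧ ((i, j) ∉ B ∪ C ∪ S ∨
          ((i, j) ∈ C ∧ ω i j = 0) ∨ ((i, j) ∈ S ∧ ω i j = 0))) ∧
        (∀ i j, (i, j) ∈ C → ω i j = 0 → 0 ≤ y i j) ∧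
        (∀ i j, (i, j) ∈ S → ω i j = 0 → y i j ≤ 0) ∧
        ∃ ξ : Fin (n - r - 1) → ℝ,
          EscrY y * Z = Matrix.vecMulVec (fun _ => 1) ξ := by
  constructor
  · rintro ⟨p', hp', hnc⟩
    exact exists_free_stress_of_affinelyDominated hstress hproper hZ hp' hnc
  · rintro ⟨y, hy, hsupp, hyC, hyS, ξ, hξ⟩
    exact exists_affinelyDominated_of_free_stress hG hdim hcentroid hZ hy hsupp hyC hyS hξ
end
end
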